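/- arXiv:1802.07823 — 4 statements merged into one kernel-verified Lean document; each statement's English description precedes it below -/
import Mathlib

section
/- Let p ≥ 0 be real, λ > 0 real, γ, σ complex, a complex with Re(a) > 0, ϑ, υ complex with Re(υ) > Re(ϑ) > 0, Re(σ) > 0, and z complex with |z| < 1. Then the extended Hurwitz–Lerch zeta function has the integral representation Φ_{γ,ϑ;υ}(z,σ,a;p,λ) = (1/Γ(σ)) ∫_0^∞ t^{σ−1} e^{−a t} F_p^λ(γ,ϑ;υ; z e^{−t}) dt. -/
/-!
Expanding `F_p^λ(γ,ϑ;υ; z e^{-t})` as a power series in `e^{-t}`, the integrand becomes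
`∑ₙ wₙ t^{σ-1} e^{-(n+a)t}` with `wₙ` the `n`-th coefficient of `Φ`, and each term integrates to
`Γ(σ) wₙ (n+a)^{-σ}` (a Laplace transform, obtained for complex `n + a` from the real case by
analytic continuation). Termwise integration is justified once `∑ ‖wₙ‖ < ∞`: on `(0,1]` the
integrand of `B(ϑ+n, υ-ϑ; p, λ)` decreases in norm as `n` grows, so these extended beta values are
eventually bounded, and `‖wₙ‖` is then dominated by a multiple of `(‖γ‖+1)ₙ ‖z‖ⁿ / n!`.
-/

open MeasureTheory Set Filter

/-- Mittag-Leffler function `E_λ(z) = ∑ z^n / Γ(λ n + 1)`. -/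
noncomputable def mittagLeffler (lam : ℝ) (z : ℂ) : ℂ :=
  ∑' n : ℕ, z ^ n / (Real.Gamma (lam * n + 1) : ℂ)

/-- Extended beta function `B(x,y;p,λ)`. -/
noncomputable def extBeta (x y : ℂ) (p lam : ℝ) : ℂ :=
  ∫ t in (0:ℝ)..1, (t : ℂ) ^ (x - 1) * ((1 : ℂ) - (t : ℂ)) ^ (y - 1) *
    mittagLeffler lam (-(p : ℂ) / ((t : ℂ) * (1 - (t : ℂ))))

/-- Classical beta function `B(x,y) = B(x,y;0,1)`. -/
noncomputable def classicalBeta (x y : ℂ) : ℂ := extBeta x y 0 1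

/-- Pochhammer symbol `(x)_n = x (x+1) ⋯ (x+n-1)`. -/
noncomputable def poch (x : ℂ) (n : ℕ) : ℂ := (ascPochhammer ℂ n).eval x

/-- Extended Hurwitz–Lerch zeta function `Φ_{γ,ϑ;υ}(z,σ,a;p,λ)`. -/
noncomputable def extHLZeta (γ ϑ υ z σ a : ℂ) (p lam : ℝ) : ℂ :=
  ∑' n : ℕ, poch γ n * extBeta (ϑ + n) (υ - ϑ) p lam /
    (classicalBeta ϑ (υ - ϑ) * (n.factorial : ℂ)) * z ^ n / ((n : ℂ) + a) ^ σ

/-- Extended Gauss hypergeometric function `F_p^λ(γ,ϑ;υ;z)`. -/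
noncomputable def extHyper (γ ϑ υ : ℂ) (p lam : ℝ) (z : ℂ) : ℂ :=
  ∑' n : ℕ, poch γ n * extBeta (ϑ + n) (υ - ϑ) p lam /
    classicalBeta ϑ (υ - ϑ) * z ^ n / (n.factorial : ℂ)

/-- Goyal–Laddha Hurwitz–Lerch zeta function `Φ*_γ(z,σ,a)`. -/
noncomputable def goyalLaddha (γ z σ a : ℂ) : ℂ :=
  ∑' n : ℕ, poch γ n / (n.factorial : ℂ) * z ^ n / ((n : ℂ) + a) ^ σ

/-- Limiting case `Φ*_{ϑ;υ}(z,σ,a;p,λ)`. -/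
noncomputable def limitHLZeta (ϑ υ z σ a : ℂ) (p lam : ℝ) : ℂ :=
  ∑' n : ℕ, extBeta (ϑ + n) (υ - ϑ) p lam /
    (classicalBeta ϑ (υ - ϑ) * (n.factorial : ℂ)) * z ^ n / ((n : ℂ) + a) ^ σ

/-- Garg Hurwitz–Lerch zeta function `Φ_{γ,ϑ;υ}(z,σ,a)`. -/
noncomputable def gargZeta (γ ϑ υ z σ a : ℂ) : ℂ :=
  ∑' n : ℕ, poch γ n * poch ϑ n / (poch υ n * (n.factorial : ℂ)) *
    z ^ n / ((n : ℂ) + a) ^ σ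

open Complex Topology

lemma norm_cpow_mul_cexp_neg_mul {s b : ℂ} {t : ℝ} (ht : 0 < t) :
    ‖(t : ℂ) ^ (s - 1) * cexp (-b * t)‖ = t ^ (s.re - 1) * Real.exp (-b.re * t) := by
  rw [norm_mul, norm_cpow_eq_rpow_re_of_pos ht, norm_exp]
  simp

lemma integrableOn_rpow_mul_exp_neg_mul_Ioi {c d : ℝ} (hc : -1 < c) (hd : 0 < d) :
    IntegrableOn (fun t : ℝ => t ^ c * Real.exp (-d * t)) (Ioi 0) := by
  simpa using integrableOn_rpow_mul_exp_neg_mul_rpow hc one_pos hd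

lemma integrableOn_cpow_mul_cexp_neg_mul_Ioi {s b : ℂ} (hs : 0 < s.re) (hb : 0 < b.re) :
    IntegrableOn (fun t : ℝ => (t : ℂ) ^ (s - 1) * cexp (-b * t)) (Ioi 0) := by
  refine Integrable.mono' (g := fun t : ℝ => t ^ (s.re - 1) * Real.exp (-b.re * t)) ?_
    (by fun_prop) ?_
  · exact integrableOn_rpow_mul_exp_neg_mul_Ioi (by linarith) hb
  · filter_upwards [ae_restrict_mem measurableSet_Ioi] with t ht
    exact (norm_cpow_mul_cexp_neg_mul ht).le

lemma differentiableAt_integral_cpow_mul_cexp_neg_mul {s b : ℂ} (hs : 0 < s.re) (hb : 0 < b.re) :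
    DifferentiableAt ℂ (fun w : ℂ => ∫ t in Ioi (0 : ℝ), (t : ℂ) ^ (s - 1) * cexp (-w * t)) b := by
  have hball : ∀ w ∈ Metric.ball b (b.re / 2), b.re / 2 < w.re := fun w hw => by
    have := (abs_re_le_norm (w - b)).trans_lt (mem_ball_iff_norm.1 hw)
    rw [sub_re, abs_lt] at this
    linarith
  refine (hasDerivAt_integral_of_dominated_loc_of_deriv_le (Metric.ball_mem_nhds b (half_pos hb))
    (F' := fun w (t : ℝ) => (t : ℂ) ^ (s - 1) * cexp (-w * t) * -t)
    (bound := fun t : ℝ => t ^ s.re * Real.exp (-(b.re / 2) * t))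
    (Eventually.of_forall fun w => by fun_prop)
    (integrableOn_cpow_mul_cexp_neg_mul_Ioi hs hb).integrable
    (by fun_prop) ?_ ?_ ?_).2.differentiableAt
  · filter_upwards [ae_restrict_mem measurableSet_Ioi] with t (ht : 0 < t) w hw
    rw [norm_mul, norm_cpow_mul_cexp_neg_mul ht, norm_neg, norm_real, Real.norm_of_nonneg ht.le,
      mul_right_comm, ← Real.rpow_add_one ht.ne', sub_add_cancel]
    gcongr
    nlinarith [hball w hw]
  · exact integrableOn_rpow_mul_exp_neg_mul_Ioi (by linarith) (half_pos hb)
  · filter_upwards with t w _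
    exact (((hasDerivAt_id w).neg.mul_const (t : ℂ)).cexp.const_mul
      ((t : ℂ) ^ (s - 1))).congr_deriv
      (by simp only [Pi.neg_apply, id_eq, neg_mul, one_mul, mul_neg, neg_inj]; ring)

lemma integral_cpow_mul_cexp_neg_mul_Ioi {s b : ℂ} (hs : 0 < s.re) (hb : 0 < b.re) :
    ∫ t in Ioi (0 : ℝ), (t : ℂ) ^ (s - 1) * cexp (-b * t) = Gamma s * b ^ (-s) := by
  set U : Set ℂ := {w | 0 < w.re}
  have hU : IsOpen U := isOpen_lt continuous_const continuous_re
  have hF : AnalyticOnNhd ℂ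
      (fun w : ℂ => ∫ t in Ioi (0 : ℝ), (t : ℂ) ^ (s - 1) * cexp (-w * t)) U :=
    DifferentiableOn.analyticOnNhd (fun w hw =>
      (differentiableAt_integral_cpow_mul_cexp_neg_mul hs hw).differentiableWithinAt) hU
  have hG : AnalyticOnNhd ℂ (fun w : ℂ => Gamma s * w ^ (-s)) U :=
    DifferentiableOn.analyticOnNhd (fun w hw => ((differentiableAt_id.cpow_const
      (Or.inl hw)).const_mul _).differentiableWithinAt) hU
  have hreal : ∀ r : ℝ, 0 < r →
      ∫ t in Ioi (0 : ℝ), (t : ℂ) ^ (s - 1) * cexp (-r * t) = Gamma s * (r : ℂ) ^ (-s) := by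
    intro r hr
    have harg : arg r ≠ Real.pi := by
      rw [arg_ofReal_of_nonneg hr.le]
      exact Real.pi_ne_zero.symm
    simp_rw [neg_mul, integral_cpow_mul_exp_neg_mul_Ioi hs hr, one_div, inv_cpow _ _ harg,
      cpow_neg, mul_comm]
  have hofReal : Tendsto ((↑) : ℝ → ℂ) (𝓝[>] 1) (𝓝[≠] 1) :=
    tendsto_nhdsWithin_iff.2 ⟨(continuous_ofReal.tendsto' 1 1 ofReal_one).mono_left
      nhdsWithin_le_nhds, eventually_nhdsWithin_of_forall fun r hr => by simpa using hr.ne'⟩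
  have hfreq : ∃ᶠ w in 𝓝[≠] (1 : ℂ),
      ∫ t in Ioi (0 : ℝ), (t : ℂ) ^ (s - 1) * cexp (-w * t) = Gamma s * w ^ (-s) :=
    hofReal.frequently (eventually_nhdsWithin_of_forall fun r hr =>
      hreal r (one_pos.trans hr) : ∀ᶠ r in 𝓝[>] (1 : ℝ), _).frequently
  exact hF.eqOn_of_preconnected_of_frequently_eq hG (convex_halfSpace_re_gt 0).isPreconnected
    (by simp [U]) hfreq hb

lemma integral_cpow_mul_cexp_neg_mul_tsum {s a : ℂ} (hs : 0 < s.re) (ha : 0 < a.re) {w : ℕ → ℂ}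
    (hw : Summable fun n => ‖w n‖) :
    ∫ t in Ioi (0 : ℝ), (t : ℂ) ^ (s - 1) * cexp (-a * t) * ∑' n, w n * cexp (-t) ^ n =
      Gamma s * ∑' n : ℕ, w n / (n + a) ^ s := by
  set g : ℕ → ℝ → ℂ := fun n t => (t : ℂ) ^ (s - 1) * cexp (-(n + a) * t) * w n
  have hre : ∀ n : ℕ, 0 < ((n : ℂ) + a).re := fun n => by simp only [add_re, natCast_re]; positivity
  have hg : ∀ n, Integrable (g n) (volume.restrict (Ioi 0)) := fun n =>
    (integrableOn_cpow_mul_cexp_neg_mul_Ioi hs (hre n)).integrable.mul_const _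
  have hg_norm : ∀ n, ∫ t in Ioi (0 : ℝ), ‖g n t‖ ≤
      (∫ t in Ioi (0 : ℝ), t ^ (s.re - 1) * Real.exp (-a.re * t)) * ‖w n‖ := fun n => by
    rw [← integral_mul_const]
    refine setIntegral_mono_on (hg n).norm
      ((integrableOn_rpow_mul_exp_neg_mul_Ioi (by linarith) ha).mul_const _) measurableSet_Ioi
      fun t (ht : 0 < t) => ?_
    have hexp : Real.exp (-((n : ℂ) + a).re * t) ≤ Real.exp (-a.re * t) :=
      Real.exp_le_exp.2 (by simp only [add_re, natCast_re]; nlinarith [n.cast_nonneg (α := ℝ)])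
    rw [norm_mul, norm_cpow_mul_cexp_neg_mul ht]
    gcongr
  have hg_sum : Summable fun n => ∫ t in Ioi (0 : ℝ), ‖g n t‖ :=
    .of_nonneg_of_le (fun n => integral_nonneg fun t => norm_nonneg _) hg_norm (hw.mul_left _)
  calc ∫ t in Ioi (0 : ℝ), (t : ℂ) ^ (s - 1) * cexp (-a * t) * ∑' n, w n * cexp (-t) ^ n
      = ∫ t in Ioi (0 : ℝ), ∑' n, g n t := by
        congr 1; ext t
        rw [← tsum_mul_left]
        congr 1; ext n
        have : cexp (-a * t) * cexp (-t) ^ n = cexp (-(n + a) * t) := by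
          rw [← exp_nat_mul, ← exp_add]; ring_nf
        simp only [g, ← this]; ring
    _ = ∑' n, ∫ t in Ioi (0 : ℝ), g n t := (integral_tsum_of_summable_integral_norm hg hg_sum).symm
    _ = ∑' n : ℕ, Gamma s * (w n / (n + a) ^ s) := by
        congr 1; ext n
        rw [integral_mul_const, integral_cpow_mul_cexp_neg_mul_Ioi hs (hre n), cpow_neg]
        ring
    _ = Gamma s * ∑' n : ℕ, w n / (n + a) ^ s := tsum_mul_left

lemma summable_ascPochhammer_eval_mul_pow_div_factorial {c r : ℝ} (hc : 0 < c) (hr0 : 0 ≤ r)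
    (hr : r < 1) : Summable fun n : ℕ => (ascPochhammer ℝ n).eval c * r ^ n / n.factorial := by
  have hradius : (ordinaryHypergeometricSeries ℝ c 1 1).radius = 1 :=
    ordinaryHypergeometricSeries_radius_eq_one ℝ c 1 1 fun k => by
      refine ⟨?_, ?_, ?_⟩ <;> · intro h; have : (0 : ℝ) ≤ k := k.cast_nonneg; linarith
  have := (ordinaryHypergeometricSeries ℝ c 1 1).summable_norm_apply (x := r)
    (by
      rw [hradius, mem_eball_zero_iff, enorm_eq_nnnorm, ENNReal.coe_lt_one_iff, ← NNReal.coe_lt_coe,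
        coe_nnnorm, Real.norm_of_nonneg hr0]
      exact hr)
  refine this.congr fun n => ?_
  have := ascPochhammer_pos n c hc
  rw [ordinaryHypergeometricSeries_apply_eq, ascPochhammer_eval_one, smul_eq_mul,
    Real.norm_of_nonneg (by positivity)]
  field_simp

lemma norm_poch_le {γ : ℂ} {c : ℝ} (hc : ‖γ‖ ≤ c) :
    ∀ n : ℕ, ‖poch γ n‖ ≤ (ascPochhammer ℝ n).eval c
  | 0 => by simp [poch]
  | n + 1 => by
    have ih := norm_poch_le hc n
    rw [poch, ascPochhammer_succ_eval, ascPochhammer_succ_eval, norm_mul]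
    exact mul_le_mul ih ((norm_add_le _ _).trans (by simpa using hc)) (norm_nonneg _)
      ((norm_nonneg _).trans ih)

lemma summable_norm_poch_mul_mul_pow_div_factorial {γ z : ℂ} {b : ℕ → ℂ} {C : ℝ}
    (hb : ∀ᶠ n in atTop, ‖b n‖ ≤ C) (hz : ‖z‖ < 1) :
    Summable fun n : ℕ => ‖poch γ n * b n * z ^ n / n.factorial‖ := by
  -- `‖γ‖ + 1` rather than `‖γ‖`: the radius-one lemma excludes non-positive integer parameters
  refine .of_norm_bounded_eventually_nat
    ((summable_ascPochhammer_eval_mul_pow_div_factorial (c := ‖γ‖ + 1) (by positivity)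
      (norm_nonneg z) hz).mul_left C) (hb.mono fun n hn => ?_)
  have hpoch := norm_poch_le (γ := γ) (le_add_of_nonneg_right zero_le_one) n
  calc ‖‖poch γ n * b n * z ^ n / n.factorial‖‖
      = ‖poch γ n‖ * ‖b n‖ * (‖z‖ ^ n / n.factorial) := by
        rw [norm_norm, norm_div, norm_mul, norm_mul, norm_pow, norm_natCast, mul_div_assoc]
    _ ≤ (ascPochhammer ℝ n).eval (‖γ‖ + 1) * C * (‖z‖ ^ n / n.factorial) := by
        gcongr
        exact (norm_nonneg _).trans hpoch
    _ = C * ((ascPochhammer ℝ n).eval (‖γ‖ + 1) * ‖z‖ ^ n / n.factorial) := by ring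

lemma exists_eventually_norm_integral_cpow_add_nat_mul_le (x : ℂ) (k : ℝ → ℂ) :
    ∃ C, ∀ᶠ n : ℕ in atTop, ‖∫ t in (0 : ℝ)..1, (t : ℂ) ^ (x + n - 1) * k t‖ ≤ C := by
  set f : ℕ → ℝ → ℂ := fun n t => (t : ℂ) ^ (x + n - 1) * k t
  by_cases hint : ∃ m, IntervalIntegrable (f m) volume 0 1
  · obtain ⟨m, hm⟩ := hint
    refine ⟨∫ t in (0 : ℝ)..1, ‖f m t‖, eventually_atTop.2 ⟨m, fun n hmn => ?_⟩⟩
    have hmono : ∀ t ∈ Ioc (0 : ℝ) 1, ‖f n t‖ ≤ ‖f m t‖ := fun t ⟨ht0, ht1⟩ => by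
      simp only [f, norm_mul, norm_cpow_eq_rpow_re_of_pos ht0]
      gcongr ?_ * _
      exact Real.rpow_le_rpow_of_exponent_ge ht0 ht1 (by simpa using hmn)
    refine (intervalIntegral.norm_integral_le_integral_norm zero_le_one).trans ?_
    rw [intervalIntegral.integral_of_le zero_le_one, intervalIntegral.integral_of_le zero_le_one]
    exact integral_mono_of_nonneg (.of_forall fun t => norm_nonneg _)
      ((intervalIntegrable_iff_integrableOn_Ioc_of_le zero_le_one).1 hm).norm
      ((ae_restrict_iff' measurableSet_Ioc).2 (.of_forall hmono))
  · push Not at hint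
    -- every integral is the junk value `0`
    exact ⟨0, .of_forall fun n => by simp [intervalIntegral.integral_undef (hint n), f]⟩

theorem extHLZeta_integral_repr_general (p lam : ℝ) (γ σ a ϑ υ z : ℂ)
    (ha : 0 < a.re) (hσ : 0 < σ.re) (hz : ‖z‖ < 1) :
    extHLZeta γ ϑ υ z σ a p lam =
      (1 / Complex.Gamma σ) *
        ∫ t in Ioi (0:ℝ), (t : ℂ) ^ (σ - 1) * Complex.exp (-a * t) *
          extHyper γ ϑ υ p lam (z * Complex.exp (-(t : ℂ))) := by
  set β : ℕ → ℂ := fun n => extBeta (ϑ + n) (υ - ϑ) p lam / classicalBeta ϑ (υ - ϑ)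
  set w : ℕ → ℂ := fun n => poch γ n * β n * z ^ n / n.factorial
  obtain ⟨C, hC⟩ := exists_eventually_norm_integral_cpow_add_nat_mul_le ϑ
    fun t => (1 - (t : ℂ)) ^ (υ - ϑ - 1) * mittagLeffler lam (-(p : ℂ) / (t * (1 - t)))
  have hβ : ∀ᶠ n in atTop, ‖β n‖ ≤ C / ‖classicalBeta ϑ (υ - ϑ)‖ := hC.mono fun n hn => by
    rw [norm_div]
    gcongr
    simpa only [extBeta, mul_assoc] using hn
  have hHyper : ∀ t : ℝ, extHyper γ ϑ υ p lam (z * cexp (-t)) = ∑' n, w n * cexp (-t) ^ n :=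
    fun t => tsum_congr fun n => by simp only [w, β, mul_pow]; ring
  have hZeta : extHLZeta γ ϑ υ z σ a p lam = ∑' n : ℕ, w n / (n + a) ^ σ :=
    tsum_congr fun n => by simp only [w, β]; ring
  simp_rw [hHyper]
  rw [integral_cpow_mul_cexp_neg_mul_tsum hσ ha
      (summable_norm_poch_mul_mul_pow_div_factorial hβ hz), hZeta, ← mul_assoc,
    one_div_mul_cancel (Gamma_ne_zero_of_re_pos hσ), one_mul]

/-- integral representation of the extended Hurwitz–Lerch zeta
function via the extended hypergeometric function. -/
theorem extHLZeta_integral_repr (p lam : ℝ) (γ σ a ϑ υ z : ℂ)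
    (hp : 0 ≤ p) (hlam : 0 < lam) (ha : 0 < a.re)
    (hϑ : 0 < ϑ.re) (hυϑ : ϑ.re < υ.re) (hσ : 0 < σ.re) (hz : ‖z‖ < 1) :
    extHLZeta γ ϑ υ z σ a p lam =
      (1 / Complex.Gamma σ) *
        ∫ t in Ioi (0:ℝ), (t : ℂ) ^ (σ - 1) * Complex.exp (-a * t) *
          extHyper γ ϑ υ p lam (z * Complex.exp (-(t : ℂ))) :=
  extHLZeta_integral_repr_general p lam γ σ a ϑ υ z ha hσ hz
end

section
/- Let p ≥ 0 be real, λ > 0 real, γ, σ complex, a complex that is not a nonpositive integer, ϑ, υ complex with Re(υ) > Re(ϑ) > 0, and n a nonnegative integer. Then for all complex z with |z| < 1, the n-th derivative with respect to z satisfies d^n/dz^n [Φ_{γ,ϑ;υ}(z,σ,a;p,λ)] = ((γ)_n (ϑ)_n / (υ)_n) · Φ_{γ+n,ϑ+n;υ+n}(z,σ,a+n;p,λ). -/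
open MeasureTheory Set Filter

/-! `Φ` is a power series in `z` whose coefficients grow at most polynomially: `(γ)_k / k!` is
`O(k ^ ⌈‖γ‖⌉)`, the extended beta values `B(ϑ + k, υ - ϑ; p, λ)` stay bounded because `t ^ k ≤ 1`
on `[0, 1]`, and `(k + a) ^ (-σ)` is of order `k ^ (-Re σ)`. So it can be differentiated termwise in
the unit disc, and the beta recurrence `B(ϑ + 1, υ - ϑ) = ϑ / υ · B(ϑ, υ - ϑ)` identifies the
derivative with `γ ϑ / υ · Φ_{γ+1,ϑ+1;υ+1}(z, σ, a + 1; p, λ)`. Induction on `n` finishes. -/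

open Asymptotics Topology
open scoped Nat

theorem isBigO_natCast_add_one_pow (d : ℕ) :
    (fun k : ℕ => ((k : ℝ) + 1) ^ d) =O[atTop] fun k => (k : ℝ) ^ d := by
  refine ((isBigO_refl _ _).add ?_).pow d
  exact (isBigO_const_left_iff_pos_le_norm one_ne_zero).2
    ⟨1, one_pos, (eventually_ge_atTop 1).mono fun k hk => by simpa using hk⟩

theorem isBigO_natCast_rpow_natCeil (e : ℝ) :
    (fun k : ℕ => (k : ℝ) ^ e) =O[atTop] fun k => (k : ℝ) ^ ⌈e⌉₊ := by
  refine IsBigO.of_bound 1 ?_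
  filter_upwards [eventually_ge_atTop 1] with k hk
  rw [one_mul, Real.norm_of_nonneg (by positivity), Real.norm_of_nonneg (by positivity),
    ← Real.rpow_natCast]
  exact Real.rpow_le_rpow_of_exponent_le (mod_cast hk) (Nat.le_ceil e)

theorem isTheta_norm_natCast_add (a : ℂ) :
    (fun k : ℕ => ‖(k : ℂ) + a‖) =Θ[atTop] fun k => (k : ℝ) := by
  have hk : Tendsto (norm ∘ fun k : ℕ => (k : ℂ)) atTop atTop := by
    simpa [Function.comp_def] using tendsto_natCast_atTop_atTop
  simpa using ((IsEquivalent.refl (u := fun k : ℕ => (k : ℂ))).add_const_of_norm_tendsto_atTop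
    (c := a) hk).isTheta.norm_left.norm_right

theorem isBigO_natCast_add_cpow_inv (a σ : ℂ) :
    (fun k : ℕ => (((k : ℂ) + a) ^ σ)⁻¹) =O[atTop] fun k => (k : ℝ) ^ ⌈-σ.re⌉₊ := by
  simp_rw [← Complex.cpow_neg]
  refine (Complex.isBigO_cpow_rpow isBoundedUnder_const).trans ?_
  refine (IsTheta.rpow ?_ ?_ (isTheta_norm_natCast_add a)).isBigO.trans ?_
  · exact .of_forall fun _ => norm_nonneg _
  · exact .of_forall fun _ => Nat.cast_nonneg _
  · simpa using isBigO_natCast_rpow_natCeil (-σ.re)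

theorem norm_ascPochhammer_eval_le {R : Type*} [NormedRing R] [NormOneClass R] {x : R} {y : ℝ}
    (hxy : ‖x‖ ≤ y) (k : ℕ) : ‖(ascPochhammer R k).eval x‖ ≤ (ascPochhammer ℝ k).eval y := by
  induction k with
  | zero => simp
  | succ k ih =>
    rw [ascPochhammer_succ_eval, ascPochhammer_succ_eval]
    have hxk : ‖x + k‖ ≤ y + k :=
      (norm_add_le _ _).trans (add_le_add hxy (by simpa using Nat.norm_cast_le (α := R) k))
    exact (norm_mul_le _ _).trans (mul_le_mul ih hxk (norm_nonneg _) ((norm_nonneg _).trans ih))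

theorem norm_ascPochhammer_eval_le_factorial_mul {R : Type*} [NormedRing R] [NormOneClass R]
    (x : R) (k : ℕ) : ‖(ascPochhammer R k).eval x‖ ≤ k ! * ((k : ℝ) + 1) ^ ⌈‖x‖⌉₊ := by
  set N := ⌈‖x‖⌉₊
  calc ‖(ascPochhammer R k).eval x‖ ≤ (ascPochhammer ℝ k).eval ((N + 1 : ℕ) : ℝ) :=
        norm_ascPochhammer_eval_le (by push_cast; linarith [Nat.le_ceil ‖x‖]) k
    _ = ((k ! * (N + k).choose k : ℕ) : ℝ) := by
        rw [← Nat.cast_ascFactorial, Nat.ascFactorial_eq_factorial_mul_choose]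
    _ ≤ ((k ! * (k + 1) ^ N : ℕ) : ℝ) := by
        gcongr
        rw [← Nat.choose_symm_add, add_comm]
        exact Nat.choose_add_le_add_one_pow k N
    _ = k ! * ((k : ℝ) + 1) ^ N := by push_cast; ring

theorem isBigO_poch_div_factorial (γ : ℂ) :
    (fun k : ℕ => poch γ k / k !) =O[atTop] fun k => (k : ℝ) ^ ⌈‖γ‖⌉₊ := by
  refine (isBigO_of_le _ fun k => ?_).trans (isBigO_natCast_add_one_pow _)
  rw [norm_div, Complex.norm_natCast, div_le_iff₀ (mod_cast k.factorial_pos),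
    Real.norm_of_nonneg (by positivity), mul_comm]
  exact norm_ascPochhammer_eval_le_factorial_mul γ k

theorem norm_cpow_add_natCast_mul_le {x : ℂ} {f : ℝ → ℂ} {j k : ℕ} (hjk : j ≤ k) {t : ℝ}
    (ht : t ∈ Ioc (0 : ℝ) 1) : ‖(t : ℂ) ^ (x + k) * f t‖ ≤ ‖(t : ℂ) ^ (x + j) * f t‖ := by
  rw [norm_mul, norm_mul, Complex.norm_cpow_eq_rpow_re_of_pos ht.1,
    Complex.norm_cpow_eq_rpow_re_of_pos ht.1]
  gcongr ?_ * _
  exact Real.rpow_le_rpow_of_exponent_ge ht.1 ht.2 (by simpa using hjk)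

/-- The integrand decreases in `k` on `(0, 1]`; if it is integrable for no `k`, every integral is
the junk value `0`. -/
theorem isBigO_intervalIntegral_cpow_add_natCast_mul (x : ℂ) (f : ℝ → ℂ) :
    (fun k : ℕ => ∫ t in (0:ℝ)..1, (t : ℂ) ^ (x + k) * f t) =O[atTop] fun _ => (1 : ℝ) := by
  by_cases h : ∃ j : ℕ, IntervalIntegrable (fun t : ℝ => (t : ℂ) ^ (x + j) * f t) volume 0 1
  · obtain ⟨j, hj⟩ := h
    refine IsBigO.of_bound (∫ t in (0:ℝ)..1, ‖(t : ℂ) ^ (x + j) * f t‖) ?_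
    filter_upwards [eventually_ge_atTop j] with k hjk
    rw [norm_one, mul_one]
    exact intervalIntegral.norm_integral_le_of_norm_le zero_le_one
      (.of_forall fun t => norm_cpow_add_natCast_mul_le hjk) hj.norm
  · push Not at h
    simp only [intervalIntegral.integral_undef (h _)]
    exact isBigO_zero _ _

theorem isBigO_extBeta_add_natCast (x y : ℂ) (p lam : ℝ) :
    (fun k : ℕ => extBeta (x + k) y p lam) =O[atTop] fun _ => (1 : ℝ) := by
  convert isBigO_intervalIntegral_cpow_add_natCast_mul (x - 1)
    (fun t => ((1 : ℂ) - t) ^ (y - 1) * mittagLeffler lam (-(p : ℂ) / (t * (1 - t)))) using 2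
  rw [extBeta]
  congr 1 with t
  rw [← mul_assoc, add_sub_right_comm]

theorem hasDerivAt_tsum_mul_pow {c : ℕ → ℂ} {d : ℕ} (hc : c =O[atTop] fun k => (k : ℝ) ^ d)
    {z : ℂ} (hz : ‖z‖ < 1) :
    HasDerivAt (fun w => ∑' k, c k * w ^ k) (∑' k : ℕ, ((k : ℂ) + 1) * c (k + 1) * z ^ k) z := by
  obtain ⟨r, hzr, hr1⟩ := exists_between hz
  have hr0 : 0 < r := (norm_nonneg z).trans_lt hzr
  have hgeom : Summable fun k : ℕ => (k : ℝ) ^ (d + 1) * r ^ k :=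
    summable_pow_mul_geometric_of_norm_lt_one (d + 1) (by rwa [Real.norm_of_nonneg hr0.le])
  have hcr : (fun k : ℕ => ‖c k‖ * (k * r ^ k)) =O[atTop] fun k : ℕ => (k : ℝ) ^ (d + 1) * r ^ k :=
    (hc.norm_left.mul (isBigO_refl (fun k : ℕ => (k : ℝ) * r ^ k) atTop)).congr_right
      fun k => by ring
  have hu : Summable fun k : ℕ => ‖c k‖ * (k * r ^ k) / r :=
    (summable_of_isBigO_nat hgeom hcr).div_const r
  have hbound : ∀ (k : ℕ), ∀ y ∈ Metric.ball (0 : ℂ) r,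
      ‖c k * (k * y ^ (k - 1))‖ ≤ ‖c k‖ * (k * r ^ k) / r := by
    rintro (_ | k) y hy
    · simp
    · rw [mem_ball_zero_iff] at hy
      rw [norm_mul, norm_mul, norm_pow, Complex.norm_natCast, Nat.add_sub_cancel, pow_succ,
        mul_div_assoc, mul_div_assoc, mul_div_cancel_right₀ _ hr0.ne']
      gcongr
  have hseries := hasDerivAt_tsum_of_isPreconnected hu Metric.isOpen_ball
    (convex_ball 0 r).isPreconnected (g := fun k w => c k * w ^ k)
    (fun k y _ => (hasDerivAt_pow k y).const_mul (c k)) hbound (Metric.mem_ball_self hr0)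
    (summable_of_ne_finset_zero (s := {0}) (by simp_all)) (mem_ball_zero_iff.2 hzr)
  have hshift : ∑' k : ℕ, c k * (k * z ^ (k - 1)) = ∑' k : ℕ, ((k : ℂ) + 1) * c (k + 1) * z ^ k := by
    rw [tsum_eq_zero_add' (.of_norm_bounded ((summable_nat_add_iff 1).mpr hu)
      fun k => hbound (k + 1) z (mem_ball_zero_iff.2 hzr))]
    simp only [Nat.cast_zero, zero_mul, mul_zero, zero_add, Nat.cast_succ, Nat.add_sub_cancel]
    exact tsum_congr fun k => by ring
  rwa [hshift] at hseries

theorem mittagLeffler_zero (lam : ℝ) : mittagLeffler lam 0 = 1 := by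
  rw [mittagLeffler, tsum_eq_single 0 fun n hn => by simp [zero_pow hn]]
  norm_num [Real.Gamma_one]

theorem classicalBeta_eq_betaIntegral (x y : ℂ) : classicalBeta x y = Complex.betaIntegral x y := by
  rw [classicalBeta, extBeta, Complex.betaIntegral]
  refine intervalIntegral.integral_congr fun t _ => ?_
  simp [mittagLeffler_zero]

theorem classicalBeta_add_one_left {x y : ℂ} (hx : 0 < x.re) (hy : 0 < y.re) :
    classicalBeta (x + 1) y = x / (x + y) * classicalBeta x y := by
  have hxy : 0 < (x + y).re := by rw [Complex.add_re]; positivity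
  have h := Complex.Gamma_mul_Gamma_eq_betaIntegral hx hy
  have h1 := Complex.Gamma_mul_Gamma_eq_betaIntegral (s := x + 1) (by simp; positivity) hy
  have hne : x + y ≠ 0 := by intro h; simp [h] at hxy
  rw [add_right_comm, Complex.Gamma_add_one x (by rintro rfl; simp at hx),
    Complex.Gamma_add_one (x + y) hne] at h1
  have hΓ := Complex.Gamma_ne_zero_of_re_pos hxy
  rw [classicalBeta_eq_betaIntegral, classicalBeta_eq_betaIntegral]
  field_simp
  apply mul_left_cancel₀ hΓ
  linear_combination x * h - h1

theorem poch_succ (x : ℂ) (k : ℕ) : poch x (k + 1) = x * poch (x + 1) k := by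
  rw [poch, poch, ascPochhammer_succ_left, Polynomial.eval_mul, Polynomial.eval_X,
    Polynomial.eval_comp, Polynomial.eval_add, Polynomial.eval_X, Polynomial.eval_one]

noncomputable def extHLZetaCoeff (γ ϑ υ σ a : ℂ) (p lam : ℝ) (k : ℕ) : ℂ :=
  poch γ k * extBeta (ϑ + k) (υ - ϑ) p lam / (classicalBeta ϑ (υ - ϑ) * k !) / ((k : ℂ) + a) ^ σ

theorem extHLZeta_eq_tsum (γ ϑ υ σ a : ℂ) (p lam : ℝ) :
    (fun z => extHLZeta γ ϑ υ z σ a p lam) =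
      fun z => ∑' k, extHLZetaCoeff γ ϑ υ σ a p lam k * z ^ k := by
  ext z
  exact tsum_congr fun k => by rw [extHLZetaCoeff]; ring

theorem isBigO_extHLZetaCoeff (γ ϑ υ σ a : ℂ) (p lam : ℝ) :
    extHLZetaCoeff γ ϑ υ σ a p lam =O[atTop] fun k => (k : ℝ) ^ (⌈‖γ‖⌉₊ + ⌈-σ.re⌉₊) := by
  have h := ((isBigO_poch_div_factorial γ).mul ((isBigO_extBeta_add_natCast ϑ (υ - ϑ) p lam).mul
    (isBigO_natCast_add_cpow_inv a σ))).const_mul_left (classicalBeta ϑ (υ - ϑ))⁻¹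
  refine (h.congr_left fun k => ?_).congr_right fun k => ?_
  · rw [extHLZetaCoeff]; field_simp
  · rw [pow_add, one_mul]

theorem extHLZetaCoeff_succ {γ ϑ υ σ a : ℂ} {p lam : ℝ} (hϑ : 0 < ϑ.re) (hυϑ : ϑ.re < υ.re)
    (k : ℕ) : ((k : ℂ) + 1) * extHLZetaCoeff γ ϑ υ σ a p lam (k + 1) =
      γ * ϑ / υ * extHLZetaCoeff (γ + 1) (ϑ + 1) (υ + 1) σ (a + 1) p lam k := by
  have hβ : classicalBeta (ϑ + 1) (υ - ϑ) = ϑ / υ * classicalBeta ϑ (υ - ϑ) := by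
    rw [classicalBeta_add_one_left hϑ (by simpa using hυϑ), add_sub_cancel]
  have hϑ0 : ϑ ≠ 0 := by rintro rfl; simp at hϑ
  have hυ0 : υ ≠ 0 := by rintro rfl; simp at hυϑ; linarith
  simp only [extHLZetaCoeff, poch_succ, Nat.factorial_succ, add_sub_add_right_eq_sub, hβ]
  push_cast
  rw [show ϑ + (k + 1) = ϑ + 1 + k by ring, show (k : ℂ) + 1 + a = k + (a + 1) by ring]
  field_simp

theorem deriv_extHLZeta {γ ϑ υ σ a : ℂ} {p lam : ℝ} (hϑ : 0 < ϑ.re) (hυϑ : ϑ.re < υ.re) {z : ℂ}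
    (hz : ‖z‖ < 1) : deriv (fun w => extHLZeta γ ϑ υ w σ a p lam) z =
      γ * ϑ / υ * extHLZeta (γ + 1) (ϑ + 1) (υ + 1) z σ (a + 1) p lam := by
  rw [extHLZeta_eq_tsum, (hasDerivAt_tsum_mul_pow (isBigO_extHLZetaCoeff ..) hz).deriv,
    congrFun (extHLZeta_eq_tsum ..) z, ← tsum_mul_left]
  exact tsum_congr fun k => by rw [extHLZetaCoeff_succ hϑ hυϑ, mul_assoc]

theorem extHLZeta_iteratedDeriv_general (p lam : ℝ) (γ σ a ϑ υ : ℂ) (n : ℕ)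
    (hϑ : 0 < ϑ.re) (hυϑ : ϑ.re < υ.re) :
    ∀ z : ℂ, ‖z‖ < 1 →
      iteratedDeriv n (fun w => extHLZeta γ ϑ υ w σ a p lam) z =
        poch γ n * poch ϑ n / poch υ n *
          extHLZeta (γ + n) (ϑ + n) (υ + n) z σ (a + n) p lam := by
  induction n generalizing γ a ϑ υ with
  | zero => intro z _; simp [poch]
  | succ n ih =>
    intro z hz
    have hderiv : deriv (fun w => extHLZeta γ ϑ υ w σ a p lam) =ᶠ[𝓝 z]
        fun w => γ * ϑ / υ * extHLZeta (γ + 1) (ϑ + 1) (υ + 1) w σ (a + 1) p lam :=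
      eventually_of_mem (Metric.isOpen_ball.mem_nhds (mem_ball_zero_iff.2 hz))
        fun w hw => deriv_extHLZeta hϑ hυϑ (mem_ball_zero_iff.1 hw)
    rw [iteratedDeriv_succ', (hderiv.iteratedDeriv n).eq_of_nhds, iteratedDeriv_const_mul_field,
      ih (γ + 1) (a + 1) (ϑ + 1) (υ + 1) (by simp; linarith) (by simpa using hυϑ) z hz]
    simp only [poch_succ, Nat.cast_succ, add_assoc, add_comm (1 : ℂ)]
    ring

/-- `n`-th derivative formula for the extended Hurwitz–Lerch
zeta function. -/
theorem extHLZeta_iteratedDeriv (p lam : ℝ) (γ σ a ϑ υ : ℂ) (n : ℕ)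
    (hp : 0 ≤ p) (hlam : 0 < lam) (ha : ∀ m : ℕ, a ≠ -(m : ℂ))
    (hϑ : 0 < ϑ.re) (hυϑ : ϑ.re < υ.re) :
    ∀ z : ℂ, ‖z‖ < 1 →
      iteratedDeriv n (fun w => extHLZeta γ ϑ υ w σ a p lam) z =
        poch γ n * poch ϑ n / poch υ n *
          extHLZeta (γ + n) (ϑ + n) (υ + n) z σ (a + n) p lam :=
  extHLZeta_iteratedDeriv_general p lam γ σ a ϑ υ n hϑ hυϑ
end

section
/- Let p > 0 be real, λ > 0 real, and σ₁, σ₂ complex with Re(σ₁) > 0 and Re(σ₂) > 0. Then the extended beta function has the integral representation over the half-line B(σ₁,σ₂;p,λ) = ∫_0^∞ x^{σ₁−1}/(1+x)^{σ₁+σ₂} · E_λ(−p(2 + x + 1/x)) dx. -/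
open MeasureTheory Set Filter

/-!
The substitution `x = t / (1 - t)` maps `(0, 1)` bijectively onto `(0, ∞)` with Jacobian
`1 / (1 - t)²`. Under it `1 + x = 1 / (1 - t)`, so the kernel `x^(σ₁-1) / (1+x)^(σ₁+σ₂)` times
the Jacobian becomes `t^(σ₁-1) (1-t)^(σ₂-1)`, and `2 + x + 1/x = 1 / (t (1 - t))`, which is the
argument of the Mittag-Leffler factor in the beta integral. The change of variables holds for
every integrand, since both sides vanish together when it is not integrable.
-/

lemma image_div_one_sub_Ioo : (fun t : ℝ => t / (1 - t)) '' Ioo 0 1 = Ioi 0 := by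
  ext x
  constructor
  · rintro ⟨t, ⟨ht0, ht1⟩, rfl⟩
    exact div_pos ht0 (sub_pos.2 ht1)
  · intro (hx : 0 < x)
    have hx1 : 0 < 1 + x := by linarith
    refine ⟨x / (1 + x), ⟨by positivity, (div_lt_one hx1).2 (by linarith)⟩, ?_⟩
    field_simp
    ring

lemma injOn_div_one_sub : InjOn (fun t : ℝ => t / (1 - t)) (Iio 1) := by
  intro a (ha : a < 1) b (hb : b < 1) hab
  have := (div_eq_div_iff (sub_pos.2 ha).ne' (sub_pos.2 hb).ne').1 hab
  linarith

lemma hasDerivAt_div_one_sub {t : ℝ} (ht : t ≠ 1) :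
    HasDerivAt (fun t : ℝ => t / (1 - t)) (1 / (1 - t) ^ 2) t :=
  ((hasDerivAt_id' t).div ((hasDerivAt_id' t).const_sub 1) (sub_ne_zero.2 ht.symm)).congr_deriv
    (by ring)

theorem integral_Ioi_eq_integral_Ioo_div_one_sub {E : Type*} [NormedAddCommGroup E]
    [NormedSpace ℝ E] (f : ℝ → E) :
    ∫ x in Ioi 0, f x = ∫ t in Ioo 0 1, (1 / (1 - t) ^ 2) • f (t / (1 - t)) := by
  rw [← image_div_one_sub_Ioo, integral_image_eq_integral_abs_deriv_smul measurableSet_Ioo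
    (fun t ht => (hasDerivAt_div_one_sub ht.2.ne).hasDerivWithinAt)
    (injOn_div_one_sub.mono fun t ht => ht.2)]
  refine setIntegral_congr_fun measurableSet_Ioo fun t _ => ?_
  rw [abs_of_nonneg (by positivity)]

lemma one_div_one_sub_sq_mul_cpow_div_cpow {t : ℝ} (ht0 : 0 < t) (ht1 : t < 1) (a b : ℂ) :
    ((1 / (1 - t) ^ 2 : ℝ) : ℂ) *
        (((t / (1 - t) : ℝ) : ℂ) ^ (a - 1) / (1 + ((t / (1 - t) : ℝ) : ℂ)) ^ (a + b)) =
      (t : ℂ) ^ (a - 1) * (1 - (t : ℂ)) ^ (b - 1) := by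
  have hu : 0 < 1 - t := sub_pos.2 ht1
  have hx1 : 1 + ((t / (1 - t) : ℝ) : ℂ) = ((1 : ℝ) : ℂ) / ((1 - t : ℝ) : ℂ) := by
    rw [← Complex.ofReal_one, ← Complex.ofReal_add, ← Complex.ofReal_div]
    congr 1
    field_simp
    ring
  rw [hx1, Complex.ofReal_div t, Complex.div_cpow_ofReal_nonneg ht0.le hu.le,
    Complex.div_cpow_ofReal_nonneg zero_le_one hu.le, Complex.ofReal_one, Complex.one_cpow,
    show (1 : ℂ) - t = ((1 - t : ℝ) : ℂ) by push_cast; rfl]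
  set u : ℂ := ((1 - t : ℝ) : ℂ)
  have hu0 : u ≠ 0 := Complex.ofReal_ne_zero.2 hu.ne'
  have hsplit : u ^ (a + b) = u ^ (a - 1) * u ^ (b - 1) * u ^ 2 := by
    rw [show a + b = (a - 1) + (b - 1) + (2 : ℕ) by push_cast; ring,
      Complex.cpow_add _ _ hu0, Complex.cpow_add _ _ hu0, Complex.cpow_natCast]
  have hne : u ^ (a - 1) ≠ 0 := Complex.cpow_ne_zero_iff.2 (Or.inl hu0)
  have hjac : ((1 / (1 - t) ^ 2 : ℝ) : ℂ) = 1 / u ^ 2 := by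
    simp only [u, Complex.ofReal_div, Complex.ofReal_one, Complex.ofReal_pow]
  rw [hjac, hsplit]
  field_simp

lemma two_add_add_one_div_div_one_sub {t : ℂ} (ht0 : t ≠ 0) (ht1 : t ≠ 1) :
    2 + t / (1 - t) + 1 / (t / (1 - t)) = 1 / (t * (1 - t)) := by
  have : 1 - t ≠ 0 := sub_ne_zero.2 ht1.symm
  field_simp
  ring

theorem extBeta_halfLine_repr_general (p lam : ℝ) (σ₁ σ₂ : ℂ) :
    extBeta σ₁ σ₂ p lam =
      ∫ x in Ioi (0:ℝ), (x : ℂ) ^ (σ₁ - 1) / ((1 : ℂ) + (x : ℂ)) ^ (σ₁ + σ₂) *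
        mittagLeffler lam (-(p : ℂ) * (2 + (x : ℂ) + 1 / (x : ℂ))) := by
  rw [integral_Ioi_eq_integral_Ioo_div_one_sub, extBeta,
    intervalIntegral.integral_of_le zero_le_one, integral_Ioc_eq_integral_Ioo]
  refine setIntegral_congr_fun measurableSet_Ioo fun t ⟨ht0, ht1⟩ => ?_
  have htC : (t : ℂ) ≠ 0 := Complex.ofReal_ne_zero.2 ht0.ne'
  have ht1C : (t : ℂ) ≠ 1 := Complex.ofReal_ne_one.2 ht1.ne
  rw [Complex.real_smul, ← mul_assoc, one_div_one_sub_sq_mul_cpow_div_cpow ht0 ht1,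
    Complex.ofReal_div, Complex.ofReal_sub, Complex.ofReal_one,
    two_add_add_one_div_div_one_sub htC ht1C, mul_one_div]

/-- half-line integral representation of the extended beta
function. -/
theorem extBeta_halfLine_repr (p lam : ℝ) (σ₁ σ₂ : ℂ)
    (hp : 0 < p) (hlam : 0 < lam) (hσ₁ : 0 < σ₁.re) (hσ₂ : 0 < σ₂.re) :
    extBeta σ₁ σ₂ p lam =
      ∫ x in Ioi (0:ℝ), (x : ℂ) ^ (σ₁ - 1) / ((1 : ℂ) + (x : ℂ)) ^ (σ₁ + σ₂) *
        mittagLeffler lam (-(p : ℂ) * (2 + (x : ℂ) + 1 / (x : ℂ))) :=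
  extBeta_halfLine_repr_general p lam σ₁ σ₂
end

section
/- Let p ≥ 0 be real, λ > 0 real, σ complex, a complex that is not a nonpositive integer, ϑ, υ complex with Re(υ) > Re(ϑ) > 0, and z complex with |z| < 1. Then, as the real parameter γ tends to +∞, Φ_{γ,ϑ;υ}(z/γ, σ, a; p, λ) converges to Φ*_{ϑ;υ}(z,σ,a;p,λ) = ∑_{n=0}^∞ B(ϑ+n,υ−ϑ;p,λ)/(B(ϑ,υ−ϑ) n!) · z^n/(n+a)^σ. -/
open MeasureTheory Set Filter

/-! Put `c n = B(ϑ+n, υ-ϑ; p, λ) z^n / ((n+a)^σ B(ϑ, υ-ϑ))`. The `n`-th term of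
`Φ_{γ,ϑ;υ}(z/γ, σ, a; p, λ)` is `(γ)_n γ^{-n} c n / n!`, and `(γ)_n γ^{-n} → 1` while
`|(γ)_n γ^{-n}| ≤ n!` for `γ ≥ 1`, so Tannery's theorem gives the limit once
`∑ |c n| < ∞`. That holds because `B(ϑ+n, υ-ϑ; p, λ)` is bounded in `n` (its integrand
only gains a factor `t^n ≤ 1`; if it is never integrable, all these values are the junk `0`),
`|(n+a)^{-σ}| = O(n^{-Re σ})`, and `|z| < 1`. -/

open Topology Asymptotics Polynomial

lemma poch_ofReal (γ : ℝ) (n : ℕ) : poch γ n = ↑((ascPochhammer ℝ n).eval γ) := by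
  rw [poch, ← Complex.ofRealHom_eq_coe, ascPochhammer_eval₂ Complex.ofRealHom, eval₂_hom,
    Complex.ofRealHom_eq_coe]

lemma ascPochhammer_eval_le_pow_mul_factorial {S : Type*} [CommRing S] [LinearOrder S]
    [IsStrictOrderedRing S] {γ : S} (hγ : 1 ≤ γ) (n : ℕ) :
    (ascPochhammer S n).eval γ ≤ γ ^ n * n.factorial := by
  induction n with
  | zero => simp
  | succ n ih =>
    rw [ascPochhammer_succ_eval, pow_succ, Nat.factorial_succ, Nat.cast_mul]
    have hpos := (ascPochhammer_pos n γ (by linarith)).le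
    have : γ + n ≤ γ * (n + 1 : ℕ) := by push_cast; nlinarith
    calc _ ≤ γ ^ n * n.factorial * (γ * (n + 1 : ℕ)) := by gcongr
      _ = _ := by ring

lemma norm_poch_div_pow_le_factorial {γ : ℝ} (hγ : 1 ≤ γ) (n : ℕ) :
    ‖poch γ n / (γ : ℂ) ^ n‖ ≤ n.factorial := by
  have hγ0 : 0 < γ := by linarith
  rw [poch_ofReal, ← Complex.ofReal_pow, ← Complex.ofReal_div, Complex.norm_real,
    Real.norm_of_nonneg (by have := ascPochhammer_pos n γ hγ0; positivity),
    div_le_iff₀ (by positivity), mul_comm]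
  exact ascPochhammer_eval_le_pow_mul_factorial hγ n

lemma tendsto_poch_div_pow (n : ℕ) :
    Tendsto (fun γ : ℝ => poch γ n / (γ : ℂ) ^ n) atTop (𝓝 1) := by
  have hdeg : (ascPochhammer ℝ n).degree = ((X : ℝ[X]) ^ n).degree := by
    rw [degree_X_pow, degree_eq_natDegree (monic_ascPochhammer ℝ n).ne_zero,
      ascPochhammer_natDegree]
  have h := div_tendsto_atTop_leadingCoeff_div_of_degree_eq _ _ hdeg
  rw [(monic_ascPochhammer ℝ n).leadingCoeff, leadingCoeff_X_pow, div_one] at h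
  simpa [poch_ofReal, Function.comp_def] using (Complex.continuous_ofReal.tendsto 1).comp h

lemma tendsto_tsum_poch_div_pow_mul {c : ℕ → ℂ} (hc : Summable fun n => ‖c n‖) :
    Tendsto (fun γ : ℝ => ∑' n, poch γ n / (γ : ℂ) ^ n / n.factorial * c n) atTop
      (𝓝 (∑' n, c n / n.factorial)) := by
  refine tendsto_tsum_of_dominated_convergence hc (fun n => ?_) ?_
  · have h := ((tendsto_poch_div_pow n).div_const (n.factorial : ℂ)).mul_const (c n)
    rwa [one_div, inv_mul_eq_div] at h
  · filter_upwards [eventually_ge_atTop 1] with γ hγ n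
    calc ‖poch γ n / (γ : ℂ) ^ n / n.factorial * c n‖
        = ‖poch γ n / (γ : ℂ) ^ n‖ / n.factorial * ‖c n‖ := by simp
      _ ≤ n.factorial / n.factorial * ‖c n‖ := by
        gcongr; exact norm_poch_div_pow_le_factorial hγ n
      _ = ‖c n‖ := by rw [div_self (by positivity), one_mul]

lemma isBigO_one_intervalIntegral_pow_mul (g : ℝ → ℂ) :
    (fun n : ℕ => ∫ t in (0 : ℝ)..1, (t : ℂ) ^ n * g t) =O[atTop] (fun _ => (1 : ℝ)) := by
  by_cases hint : ∃ N : ℕ, IntervalIntegrable (fun t : ℝ => (t : ℂ) ^ N * g t) volume 0 1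
  · obtain ⟨N, hN⟩ := hint
    refine IsBigO.of_bound (∫ t in (0 : ℝ)..1, ‖(t : ℂ) ^ N * g t‖) ?_
    filter_upwards [eventually_ge_atTop N] with n hn
    rw [norm_one, mul_one]
    refine intervalIntegral.norm_integral_le_of_norm_le zero_le_one
      (Eventually.of_forall fun t ht => ?_) hN.norm
    simp only [norm_mul, norm_pow, Complex.norm_real, Real.norm_of_nonneg ht.1.le]
    exact mul_le_mul_of_nonneg_right (pow_le_pow_of_le_one ht.1.le ht.2 hn) (norm_nonneg _)
  · push Not at hint
    simp only [intervalIntegral.integral_undef (hint _)]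
    exact isBigO_zero _ _

lemma isBigO_one_extBeta_add_nat (ϑ y : ℂ) (p lam : ℝ) :
    (fun n : ℕ => extBeta (ϑ + n) y p lam) =O[atTop] (fun _ => (1 : ℝ)) := by
  convert isBigO_one_intervalIntegral_pow_mul (fun t : ℝ => (t : ℂ) ^ (ϑ - 1) *
    ((1 : ℂ) - t) ^ (y - 1) * mittagLeffler lam (-(p : ℂ) / (t * (1 - t)))) using 2 with n
  refine intervalIntegral.integral_congr_ae (Eventually.of_forall fun t ht => ?_)
  have ht0 : (t : ℂ) ≠ 0 :=
    Complex.ofReal_ne_zero.mpr (uIoc_of_le (zero_le_one' ℝ) ▸ ht).1.ne'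
  rw [show ϑ + n - 1 = n + (ϑ - 1) by ring, Complex.cpow_add _ _ ht0, Complex.cpow_natCast]
  ring

lemma isBigO_natCast_add_cpow (a σ : ℂ) :
    (fun n : ℕ => ((n : ℂ) + a) ^ σ) =O[atTop] (fun n : ℕ => (n : ℝ) ^ σ.re) := by
  have hequiv : (fun n : ℕ => (n : ℂ) + a) ~[atTop] (fun n : ℕ => (n : ℂ)) := by
    refine IsEquivalent.refl.add_isLittleO (isLittleO_const_left.2 (Or.inr ?_))
    exact tendsto_norm_cobounded_atTop.comp tendsto_natCast_atTop_cobounded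
  have htheta : (fun n : ℕ => ‖(n : ℂ) + a‖) =Θ[atTop] (fun n : ℕ => (n : ℝ)) := by
    simpa using hequiv.isTheta.norm_left.norm_right
  refine (Complex.isBigO_cpow_rpow (isBoundedUnder_const)).trans
    (htheta.rpow (Eventually.of_forall fun _ => norm_nonneg _)
      (Eventually.of_forall fun _ => Nat.cast_nonneg _)).isBigO

lemma summable_rpow_mul_geometric (c : ℝ) {r : ℝ} (hr0 : 0 ≤ r) (hr : r < 1) :
    Summable fun n : ℕ => (n : ℝ) ^ c * r ^ n := by
  have hrpow : (fun n : ℕ => (n : ℝ) ^ c) =O[atTop] fun n : ℕ => (n : ℝ) ^ ⌈c⌉₊ := by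
    refine IsBigO.of_bound 1 ?_
    filter_upwards [eventually_ge_atTop 1] with n hn
    have hn' : (1 : ℝ) ≤ n := by exact_mod_cast hn
    rw [one_mul, Real.norm_of_nonneg (by positivity), Real.norm_of_nonneg (by positivity),
      ← Real.rpow_natCast]
    exact Real.rpow_le_rpow_of_exponent_le hn' (Nat.le_ceil c)
  refine summable_of_isBigO_nat ?_ (hrpow.mul (isBigO_refl _ _))
  exact summable_pow_mul_geometric_of_norm_lt_one _ (by rwa [Real.norm_of_nonneg hr0])

lemma summable_norm_extBeta_mul_pow_div_cpow (ϑ y : ℂ) (p lam : ℝ) {z : ℂ} (hz : ‖z‖ < 1)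
    (a σ : ℂ) :
    Summable fun n : ℕ => ‖extBeta (ϑ + n) y p lam * z ^ n / ((n : ℂ) + a) ^ σ‖ := by
  have hbig : (fun n : ℕ => extBeta (ϑ + n) y p lam * z ^ n / ((n : ℂ) + a) ^ σ) =O[atTop]
      fun n : ℕ => 1 * ‖z ^ n‖ * (n : ℝ) ^ (-σ).re := by
    simp_rw [div_eq_mul_inv, ← Complex.cpow_neg]
    exact ((isBigO_one_extBeta_add_nat ϑ y p lam).mul (isBigO_refl (z ^ ·) _).norm_right).mul
      (isBigO_natCast_add_cpow a (-σ))
  refine summable_of_isBigO_nat ?_ hbig.norm_left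
  refine (summable_rpow_mul_geometric (-σ).re (norm_nonneg z) hz).congr fun n => ?_
  rw [one_mul, norm_pow, mul_comm]

theorem extHLZeta_tendsto_limit_general (p lam : ℝ) (σ a ϑ υ z : ℂ)
    (hz : ‖z‖ < 1) :
    Tendsto (fun γ : ℝ => extHLZeta (γ : ℂ) ϑ υ (z / (γ : ℂ)) σ a p lam)
      atTop (nhds (limitHLZeta ϑ υ z σ a p lam)) := by
  set c : ℕ → ℂ := fun n =>
    extBeta (ϑ + n) (υ - ϑ) p lam * z ^ n / ((n : ℂ) + a) ^ σ / classicalBeta ϑ (υ - ϑ)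
  have hc : Summable fun n => ‖c n‖ := by
    simpa only [c, norm_div] using
      (summable_norm_extBeta_mul_pow_div_cpow ϑ (υ - ϑ) p lam hz a σ).div_const _
  have hterm : (fun γ : ℝ => extHLZeta γ ϑ υ (z / γ) σ a p lam) =
      fun γ : ℝ => ∑' n, poch γ n / (γ : ℂ) ^ n / n.factorial * c n :=
    funext fun γ => tsum_congr fun n => by ring
  have hlim : limitHLZeta ϑ υ z σ a p lam = ∑' n, c n / n.factorial :=
    tsum_congr fun n => by ring
  rw [hterm, hlim]
  exact tendsto_tsum_poch_div_pow_mul hc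

/-- limiting case of the extended Hurwitz–Lerch zeta function
as the real parameter `γ → +∞`. -/
theorem extHLZeta_tendsto_limit (p lam : ℝ) (σ a ϑ υ z : ℂ)
    (hp : 0 ≤ p) (hlam : 0 < lam) (ha : ∀ m : ℕ, a ≠ -(m : ℂ))
    (hϑ : 0 < ϑ.re) (hυϑ : ϑ.re < υ.re) (hz : ‖z‖ < 1) :
    Tendsto (fun γ : ℝ => extHLZeta (γ : ℂ) ϑ υ (z / (γ : ℂ)) σ a p lam)
      atTop (nhds (limitHLZeta ϑ υ z σ a p lam)) :=
  extHLZeta_tendsto_limit_general p lam σ a ϑ υ z hz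
end
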